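/- arXiv:1511.02308 — 3 statements merged into one kernel-verified Lean document; each statement's English description precedes it below -/
import Mathlib

section
/- Let F be a field and ν ≥ 1. Work in the multivariate polynomial ring over F with variables X(s,k) indexed by (s,k) ∈ Fin ν × Fin 4, and let Q = ∏_{s : Fin ν} ( X(s,0)·X(s,2) + X(s,1)·X(s,3) ). Define the matrix M, with rows and columns indexed by functions u, v : Fin ν → Fin 2, by setting M(u,v) equal to the coefficient in Q of the multilinear monomial (∏_{s} X(s, u(s))) · (∏_{s} X(s, 2 + v(s))) (for each s, the row side chooses X(s,0) or X(s,1) according to u(s), and the column side chooses X(s,2) or X(s,3) according to v(s)). Then M(u,v) = 1 if u = v and M(u,v) = 0 otherwise; in particular M is the 2^ν × 2^ν identity matrix and rank(M) = 2^ν. [This is the Nisan-style full-rank claim at the heart of the lower bound of Theorem 3.4: the (S,T) block of the coefficient matrix of the block-diagonal permanent is nonzero precisely when S ∩ T = ∅, so the rank is at least 2^ν.] -/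
open MvPolynomial

/-!
Each factor `X(s,0) X(s,2) + X(s,1) X(s,3)` is a sum of two monomials, indexed by `j : Fin 2`,
which use `X(s,j)` on the row side and `X(s,2+j)` on the column side. Expanding the product,
`Q` is the sum over `w : Fin ν → Fin 2` of the distinct multilinear monomials with row choice
`w` and column choice `w`, each with coefficient `1`. The monomial with row choice `u` and
column choice `v` therefore occurs in `Q` exactly when `u = v`, so the coefficient matrix is
the identity.
-/

theorem MvPolynomial.prod_sum_monomial_one {R σ ι κ : Type*} [CommSemiring R] [Fintype ι]
    [DecidableEq ι] [Fintype κ] (e : ι → κ → σ →₀ ℕ) :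
    ∏ i, ∑ k, monomial (e i k) (1 : R) = ∑ w : ι → κ, monomial (∑ i, e i (w i)) 1 := by
  rw [Fintype.prod_sum]
  exact Finset.sum_congr rfl fun w _ => (monomial_sum_one _ _).symm

namespace PermanentBlock

variable {ν : ℕ}

/-- Exponent of `∏_s X(s, u s) * ∏_s X(s, 2 + v s)`. -/
noncomputable def exponent (u v : Fin ν → Fin 2) : (Fin ν × Fin 4) →₀ ℕ :=
  ∑ s : Fin ν,
    (Finsupp.single (s, ((u s).castLE (by norm_num) : Fin 4)) 1 +
     Finsupp.single (s, (⟨(v s).val + 2, by omega⟩ : Fin 4)) 1)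

theorem exponent_apply (u v : Fin ν → Fin 2) (s : Fin ν) (k : Fin 4) :
    exponent u v (s, k) =
      (if (u s).val = k.val then 1 else 0) + (if (v s).val + 2 = k.val then 1 else 0) := by
  rw [exponent, Finsupp.finsetSum_apply, Finset.sum_eq_single s]
  · simp [Finsupp.single_apply, Prod.ext_iff, Fin.ext_iff]
  · intro t _ ht
    simp [Prod.ext_iff, ht]
  · simp

theorem exponent_injective {u v u' v' : Fin ν → Fin 2} (h : exponent u v = exponent u' v') :
    u = u' ∧ v = v' := by
  constructor <;> funext s
  · have := congrArg (· (s, (u s).castLE (by norm_num))) h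
    simp only [exponent_apply, Fin.val_castLE] at this
    split_ifs at this <;> omega
  · have := congrArg (· (s, (⟨(v s).val + 2, by omega⟩ : Fin 4))) h
    simp only [exponent_apply] at this
    split_ifs at this <;> omega

noncomputable def prodQuadratics (R : Type*) [CommSemiring R] (ν : ℕ) :
    MvPolynomial (Fin ν × Fin 4) R :=
  ∏ s : Fin ν, ((X (s, 0) : MvPolynomial (Fin ν × Fin 4) R) * X (s, 2) + X (s, 1) * X (s, 3))

theorem prodQuadratics_eq_sum_monomial (R : Type*) [CommSemiring R] (ν : ℕ) :
    prodQuadratics R ν = ∑ w : Fin ν → Fin 2, monomial (exponent w w) 1 := by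
  have factor (s : Fin ν) :
      (X (s, 0) : MvPolynomial (Fin ν × Fin 4) R) * X (s, 2) + X (s, 1) * X (s, 3)
        = ∑ j : Fin 2, monomial (Finsupp.single (s, (j.castLE (by norm_num) : Fin 4)) 1 +
            Finsupp.single (s, (⟨j.val + 2, by omega⟩ : Fin 4)) 1) 1 := by
    simp only [Fin.sum_univ_two, X, monomial_mul, mul_one]
    rfl
  simp only [prodQuadratics, factor, prod_sum_monomial_one, exponent]

theorem coeff_exponent_prodQuadratics (R : Type*) [CommSemiring R] (u v : Fin ν → Fin 2) :
    coeff (exponent u v) (prodQuadratics R ν) = if u = v then 1 else 0 := by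
  have hdiag (w : Fin ν → Fin 2) : exponent w w = exponent u v ↔ w = u ∧ w = v :=
    ⟨exponent_injective, by rintro ⟨rfl, rfl⟩; rfl⟩
  rw [prodQuadratics_eq_sum_monomial, coeff_sum]
  simp only [coeff_monomial, hdiag]
  split_ifs with huv
  · simp [huv]
  · exact Finset.sum_eq_zero fun w _ => if_neg fun hw => huv (hw.1.symm.trans hw.2)

end PermanentBlock

open PermanentBlock in
/-- The coefficient matrix of `Q = ∏_{s} (X(s,0)X(s,2) + X(s,1)X(s,3))`, with rows and
columns indexed by `u v : Fin ν → Fin 2`: entry `(u,v)` is the coefficient in `Q` of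
the monomial `(∏_s X(s, u s)) * (∏_s X(s, 2 + v s))`. This matrix is the
`2^ν × 2^ν` identity matrix, hence has rank `2^ν`. -/
theorem coeff_matrix_prod_quadratics_eq_one (F : Type*) [Field F] (ν : ℕ) :
    (∀ u v : Fin ν → Fin 2,
      (fun u v : Fin ν → Fin 2 =>
        MvPolynomial.coeff
          (∑ s : Fin ν,
            (Finsupp.single (s, ((u s).castLE (by norm_num) : Fin 4)) 1 +
             Finsupp.single (s, (⟨(v s).val + 2, by have := (v s).isLt; omega⟩ : Fin 4)) 1))
          (∏ s : Fin ν,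
            ((X (s, 0) : MvPolynomial (Fin ν × Fin 4) F) * X (s, 2) +
              X (s, 1) * X (s, 3)))) u v = if u = v then 1 else 0) ∧
    Matrix.rank
      (fun u v : Fin ν → Fin 2 =>
        MvPolynomial.coeff
          (∑ s : Fin ν,
            (Finsupp.single (s, ((u s).castLE (by norm_num) : Fin 4)) 1 +
             Finsupp.single (s, (⟨(v s).val + 2, by have := (v s).isLt; omega⟩ : Fin 4)) 1))
          (∏ s : Fin ν,
            ((X (s, 0) : MvPolynomial (Fin ν × Fin 4) F) * X (s, 2) +
              X (s, 1) * X (s, 3)))) = 2 ^ ν := by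
  have hcoeff := coeff_exponent_prodQuadratics F (ν := ν)
  have hM : (Matrix.of fun u v => coeff (exponent u v) (prodQuadratics F ν)) = 1 :=
    Matrix.ext fun u v => (hcoeff u v).trans Matrix.one_apply.symm
  refine ⟨hcoeff, ?_⟩
  calc Matrix.rank _ = Matrix.rank (1 : Matrix (Fin ν → Fin 2) (Fin ν → Fin 2) F) := congrArg _ hM
    _ = 2 ^ ν := by simp [Matrix.rank_one]
end

section
/- There exists a constant α > 0, independent of d, such that for every positive multiple d of 8: Prob[f(σ) < d/1024] ≤ exp(−αd) and Prob[f'(σ) < d/1024] ≤ exp(−αd) under the uniform distribution on permutations σ of Fin(2d); consequently Prob[f(σ) ≥ d/1024 and f'(σ) ≥ d/1024] ≥ 1 − 2·exp(−αd). [This is the concentration step of Lemma 4.7: with probability 1 − 2e^{−αd} a uniformly random permutation σ has at least d/1024 good matched pairs between I₁ and I₃ and at least d/1024 good matched pairs between I₂ and I₄.] -/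
/-- `f(σ)`: the number of indices `0 ≤ i < d/8` such that `σ(i) ∈ I₁ = {0,…,d/2−1}`
and `σ(d+i) ∈ I₃ = {d,…,3d/2−1}`, for `σ` a permutation of `Fin (2d)`. -/
def goodPairsF (d : ℕ) (σ : Equiv.Perm (Fin (2 * d))) : ℕ :=
  (Finset.univ.filter (fun i : Fin (d / 8) =>
      (σ ⟨i.val, by have := i.isLt; omega⟩).val < d / 2 ∧
      d ≤ (σ ⟨d + i.val, by have := i.isLt; omega⟩).val ∧
      (σ ⟨d + i.val, by have := i.isLt; omega⟩).val < d + d / 2)).card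

/-- `f'(σ)`: the number of indices `0 ≤ i < d/8` such that `σ(d/2+i) ∈ I₂ = {d/2,…,d−1}`
and `σ(3d/2+i) ∈ I₄ = {3d/2,…,2d−1}`, for `σ` a permutation of `Fin (2d)`. -/
def goodPairsF' (d : ℕ) (σ : Equiv.Perm (Fin (2 * d))) : ℕ :=
  (Finset.univ.filter (fun i : Fin (d / 8) =>
      d / 2 ≤ (σ ⟨d / 2 + i.val, by have := i.isLt; omega⟩).val ∧
      (σ ⟨d / 2 + i.val, by have := i.isLt; omega⟩).val < d ∧
      d + d / 2 ≤ (σ ⟨d + d / 2 + i.val, by have := i.isLt; omega⟩).val)).card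

/-!
Write `f(σ)` as the number of `i < m = d/8` with `σ aᵢ ∈ A` and `σ bᵢ ∈ B`, for distinct points
`aᵢ`, `bᵢ` and disjoint blocks `A`, `B` of `d/2` points each (likewise `f'`).
Reveal σ(a₀), σ(b₀), σ(a₁), σ(b₁), … in turn. Whatever happened before, the next pair of values is
a uniform ordered pair of distinct unused points; fewer than `2m` points are used, and `A`, `B`
still contain an eighth of the unused points each, so the pair lands in `A × B` with probability at
least `1/64`. Hence the number `X` of pairs landing in `A × B` satisfies
`E[2^(-X)] ≤ (1 - 1/128)^m`, and Markov's inequality gives `P(X ≤ j) ≤ 2^j (127/128)^m`, which is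
`exp(-Ω(m))` for `j ≤ m/128`.

Formally, `σ ↦ (σ aᵢ, σ bᵢ)ᵢ` maps permutations onto the sequences of `m` pairs with distinct
entries, each fibre having `(2d - 2m)!` elements, and the exponential moment over those sequences is
bounded by induction on `m`.
-/

open Finset

theorem Finset.card_offDiag_mul_descFactorial {α : Type*} (s : Finset α) (k : ℕ) :
    #s.offDiag * (#s - 2).descFactorial k = (#s).descFactorial (k + 2) := by
  have h2 : (#s).descFactorial 2 = #s * #s - #s := by
    simp [Nat.descFactorial_succ, Nat.mul_sub_one, Nat.mul_comm]
  rw [← Nat.descFactorial_mul_descFactorial (k := 2) (m := k + 2) (by omega), Nat.add_sub_cancel,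
    offDiag_card, h2, Nat.mul_comm]

theorem card_filter_le_le_two_pow_mul_sum {ι : Type*} (s : Finset ι) (f : ι → ℕ) (j : ℕ) :
    (#{x ∈ s | f x ≤ j} : ℝ) ≤ 2 ^ j * ∑ x ∈ s, (1 / 2 : ℝ) ^ f x := by
  rw [card_eq_sum_ones, Nat.cast_sum, mul_sum, sum_filter]
  refine sum_le_sum fun x _ => ?_
  split_ifs with h
  · rw [Nat.cast_one, one_div, inv_pow, ← div_eq_mul_inv, one_le_div (by positivity)]
    exact pow_le_pow_right₀ one_le_two h
  · positivity

theorem two_pow_mul_pow_le_exp {j m : ℕ} (h : 128 * j ≤ m) :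
    (2 : ℝ) ^ j * (127 / 128) ^ m ≤ Real.exp (-(m / 512)) := by
  have h2 : (2 : ℝ) ≤ Real.exp (3 / 4) := by
    rw [← Real.exp_log two_pos, Real.exp_le_exp]
    linarith [Real.log_two_lt_d9]
  have h127 : (127 / 128 : ℝ) ≤ Real.exp (-(1 / 128)) := by
    linarith [Real.add_one_le_exp (-(1 / 128 : ℝ))]
  have hjm : (128 * j : ℝ) ≤ m := by exact_mod_cast h
  calc (2 : ℝ) ^ j * (127 / 128) ^ m ≤ Real.exp (3 / 4) ^ j * Real.exp (-(1 / 128)) ^ m := by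
        gcongr
    _ = Real.exp (3 / 4 * j - m / 128) := by
        rw [← Real.exp_nat_mul, ← Real.exp_nat_mul, ← Real.exp_add]
        ring_nf
    _ ≤ Real.exp (-(m / 512)) := Real.exp_le_exp.2 (by linarith)

section Weight

variable {α : Type*} [DecidableEq α]

noncomputable def halfOn (S : Finset (α × α)) (z : α × α) : ℝ := if z ∈ S then 1 / 2 else 1

theorem halfOn_nonneg (S : Finset (α × α)) : 0 ≤ halfOn S := fun z => by
  unfold halfOn; split_ifs <;> norm_num

theorem prod_halfOn_eq {m : ℕ} (A B : Finset α) (a b : Fin m → α) :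
    ∏ i, halfOn (A ×ˢ B) (a i, b i) = (1 / 2 : ℝ) ^ #{i | a i ∈ A ∧ b i ∈ B} := by
  simp only [halfOn, prod_ite, prod_const, one_pow, mul_one, mem_product]

end Weight

namespace PairSeq

variable {α : Type*} [Fintype α] [DecidableEq α]

/-- Sequences of `m` pairs whose `2m` entries are pairwise distinct and lie outside `V`. -/
def fresh : (m : ℕ) → Finset α → Finset (Fin m → α × α)
  | 0, _ => univ
  | m + 1, V => ((Vᶜ.offDiag).sigma fun z => fresh m (insert z.1 (insert z.2 V))).map
      ((Equiv.sigmaEquivProd _ _).trans (Fin.consEquiv fun _ => α × α)).toEmbedding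

theorem sum_fresh_succ {M : Type*} [AddCommMonoid M] (m : ℕ) (V : Finset α)
    (f : (Fin (m + 1) → α × α) → M) :
    ∑ w ∈ fresh (m + 1) V, f w =
      ∑ z ∈ Vᶜ.offDiag, ∑ w ∈ fresh m (insert z.1 (insert z.2 V)), f (Fin.cons z w) := by
  rw [fresh, sum_map, sum_sigma]
  rfl

theorem cons_mem_fresh {m : ℕ} {V : Finset α} {z : α × α} {w : Fin m → α × α}
    (hz : z ∈ Vᶜ.offDiag) (hw : w ∈ fresh m (insert z.1 (insert z.2 V))) :
    Fin.cons z w ∈ fresh (m + 1) V := by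
  rw [fresh, mem_map]
  exact ⟨⟨z, w⟩, mem_sigma.2 ⟨hz, hw⟩, rfl⟩

theorem mem_fresh {m : ℕ} (u v : Fin m → α) (huv : (Sum.elim u v).Injective) (V : Finset α)
    (hV : ∀ k, Sum.elim u v k ∉ V) : (fun i => (u i, v i)) ∈ fresh m V := by
  induction m generalizing V with
  | zero => exact mem_univ _
  | succ m ih =>
    have hcons : (fun i => (u i, v i)) = Fin.cons (u 0, v 0) (fun i => (u i.succ, v i.succ)) := by
      ext i <;> cases i using Fin.cases <;> rfl
    have htail : Sum.elim (fun i => u i.succ) (fun i => v i.succ) =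
        Sum.elim u v ∘ Sum.map Fin.succ Fin.succ := by
      ext k; cases k <;> rfl
    have hsucc : (Sum.map (Fin.succ (n := m)) (Fin.succ (n := m))).Injective :=
      Sum.map_injective.2 ⟨Fin.succ_injective _, Fin.succ_injective _⟩
    rw [hcons]
    refine cons_mem_fresh ?_ (ih _ _ ?_ _ fun k => ?_)
    · simpa [mem_offDiag] using
        ⟨hV (.inl 0), hV (.inr 0), fun h => nomatch huv (a₁ := .inl 0) (a₂ := .inr 0) h⟩
    · rw [htail]; exact huv.comp hsucc
    · rw [htail]
      have hne : ∀ k', Sum.map Fin.succ Fin.succ k ≠ (k' : Fin (m + 1) ⊕ Fin (m + 1)) →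
          Sum.elim u v (Sum.map Fin.succ Fin.succ k) ≠ Sum.elim u v k' := fun _ h => huv.ne h
      simpa using ⟨hne (.inl 0) (by cases k <;> simp), hne (.inr 0) (by cases k <;> simp),
        hV _⟩

theorem sum_fresh_prod_le (c : α × α → ℝ) (hc : 0 ≤ c) {q : ℝ} (hq : 0 ≤ q) {K : ℕ}
    (hcq : ∀ V : Finset α, #V + 2 ≤ K → ∑ z ∈ Vᶜ.offDiag, c z ≤ q * #Vᶜ.offDiag)
    (m : ℕ) (V : Finset α) (hV : #V + 2 * m ≤ K) :
    ∑ w ∈ fresh m V, ∏ i, c (w i) ≤ q ^ m * (#Vᶜ).descFactorial (2 * m) := by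
  induction m generalizing V with
  | zero => simp [fresh]
  | succ m ih =>
    set D : ℝ := (((#Vᶜ - 2).descFactorial (2 * m) : ℕ) : ℝ)
    have hstep : ∀ z ∈ Vᶜ.offDiag,
        ∑ w ∈ fresh m (insert z.1 (insert z.2 V)), ∏ i, c (w i) ≤ q ^ m * D := by
      intro z hz
      obtain ⟨h1, h2, h12⟩ := by simpa using mem_offDiag.1 hz
      have hins : #(insert z.1 (insert z.2 V)) = #V + 2 := by
        rw [card_insert_of_notMem (by simp [h12, h1]), card_insert_of_notMem h2]
      have := ih (insert z.1 (insert z.2 V)) (by omega)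
      rwa [card_compl, hins, Nat.sub_add_eq, ← card_compl] at this
    calc ∑ w ∈ fresh (m + 1) V, ∏ i, c (w i)
        = ∑ z ∈ Vᶜ.offDiag, c z * ∑ w ∈ fresh m (insert z.1 (insert z.2 V)), ∏ i, c (w i) := by
          simp only [sum_fresh_succ, Fin.prod_univ_succ, Fin.cons_zero, Fin.cons_succ, mul_sum]
      _ ≤ ∑ z ∈ Vᶜ.offDiag, c z * (q ^ m * D) :=
          sum_le_sum fun z hz => mul_le_mul_of_nonneg_left (hstep z hz) (hc z)
      _ ≤ q * #Vᶜ.offDiag * (q ^ m * D) := by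
          rw [← sum_mul]
          exact mul_le_mul_of_nonneg_right (hcq V (by omega)) (by positivity)
      _ = q ^ (m + 1) * (#Vᶜ).descFactorial (2 * (m + 1)) := by
          rw [mul_add_one, ← card_offDiag_mul_descFactorial, Nat.cast_mul]
          ring

end PairSeq

section Perm

variable {α : Type*} [Fintype α] [DecidableEq α]

theorem card_perm_comp_eq {β : Type*} [Fintype β] {u : β → α} (hu : u.Injective)
    (σ₀ : Equiv.Perm α) :
    #{σ : Equiv.Perm α | ⇑σ ∘ u = ⇑σ₀ ∘ u} = (Fintype.card α - Fintype.card β).factorial := by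
  classical
  calc #{σ : Equiv.Perm α | ⇑σ ∘ u = ⇑σ₀ ∘ u}
      = #{τ : Equiv.Perm α | ∀ a, ¬(a ∉ Set.range u) → τ a = a} := by
        refine card_equiv (Equiv.mulLeft σ₀⁻¹) fun σ => ?_
        simp [funext_iff, Equiv.symm_apply_eq]
    _ = Fintype.card (Equiv.Perm {a // a ∉ Set.range u}) := by
        rw [← Fintype.card_subtype, Fintype.card_congr (Equiv.Perm.subtypeEquivSubtypePerm _)]
    _ = _ := by
        rw [Fintype.card_perm, Fintype.card_subtype_compl, Set.card_range_of_injective hu]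

theorem sum_perm_prod_le (c : α × α → ℝ) (hc : 0 ≤ c) {m : ℕ} {a b : Fin m → α}
    (hab : (Sum.elim a b).Injective) :
    ∑ σ : Equiv.Perm α, ∏ i, c (σ (a i), σ (b i)) ≤
      (Fintype.card α - 2 * m).factorial * ∑ w ∈ PairSeq.fresh m ∅, ∏ i, c (w i) := by
  set g : Equiv.Perm α → Fin m → α × α := fun σ i => (σ (a i), σ (b i))
  have hfiber : ∀ σ₀, #{σ | g σ = g σ₀} = (Fintype.card α - 2 * m).factorial := by
    intro σ₀
    have h := card_perm_comp_eq hab σ₀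
    rw [Fintype.card_sum, Fintype.card_fin, ← two_mul] at h
    rw [← h]
    congr 1
    ext σ
    simp [g, funext_iff, Sum.forall, forall_and]
  have himage : univ.image g ⊆ PairSeq.fresh m ∅ := by
    simp only [subset_iff, mem_image, mem_univ, true_and, forall_exists_index]
    rintro _ σ rfl
    have hσ := σ.injective.comp hab
    rw [Sum.comp_elim] at hσ
    exact PairSeq.mem_fresh _ _ hσ _ (by simp)
  calc ∑ σ : Equiv.Perm α, ∏ i, c (g σ i)
      = ∑ w ∈ univ.image g, #{σ | g σ = w} • ∏ i, c (w i) := sum_comp (fun w => ∏ i, c (w i)) g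
    _ = ∑ w ∈ univ.image g, (Fintype.card α - 2 * m).factorial • ∏ i, c (w i) := by
        refine sum_congr rfl fun w hw => ?_
        obtain ⟨σ₀, -, rfl⟩ := mem_image.1 hw
        rw [hfiber]
    _ ≤ ∑ w ∈ PairSeq.fresh m ∅, (Fintype.card α - 2 * m).factorial • ∏ i, c (w i) :=
        sum_le_sum_of_subset_of_nonneg himage fun w _ _ =>
          nsmul_nonneg (prod_nonneg fun i _ => hc (w i)) _
    _ = _ := by rw [← smul_sum, nsmul_eq_mul]

theorem sum_halfOn_offDiag_le (A B V : Finset α) (hAB : Disjoint A B) (hA : #Vᶜ ≤ 8 * #(A \ V))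
    (hB : #Vᶜ ≤ 8 * #(B \ V)) :
    ∑ z ∈ Vᶜ.offDiag, halfOn (A ×ˢ B) z ≤ 127 / 128 * #Vᶜ.offDiag := by
  unfold halfOn
  set F := Vᶜ.offDiag.filter (· ∈ A ×ˢ B)
  have hsub : (A \ V) ×ˢ (B \ V) ⊆ F := by
    intro z hz
    simp only [mem_product, mem_sdiff] at hz
    simp only [F, mem_filter, mem_offDiag, mem_compl, mem_product]
    exact ⟨⟨hz.1.2, hz.2.2, fun h => disjoint_left.1 hAB hz.1.1 (h ▸ hz.2.1)⟩, hz.1.1, hz.2.1⟩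
  have hF : #Vᶜ.offDiag ≤ 64 * #F := calc
    #Vᶜ.offDiag ≤ #Vᶜ * #Vᶜ := by rw [offDiag_card]; exact Nat.sub_le _ _
    _ ≤ 8 * #(A \ V) * (8 * #(B \ V)) := Nat.mul_le_mul hA hB
    _ = 64 * #((A \ V) ×ˢ (B \ V)) := by rw [card_product]; ring
    _ ≤ 64 * #F := Nat.mul_le_mul_left _ (card_le_card hsub)
  have hsplit := card_filter_add_card_filter_not (s := Vᶜ.offDiag) (· ∈ A ×ˢ B)
  rw [sum_ite, sum_const, sum_const, nsmul_eq_mul, nsmul_eq_mul, mul_one]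
  have : (#Vᶜ.offDiag : ℝ) ≤ 64 * #F := by exact_mod_cast hF
  have h2 : (#F : ℝ) + #(Vᶜ.offDiag.filter (· ∉ A ×ˢ B)) = #Vᶜ.offDiag := by exact_mod_cast hsplit
  linarith

theorem card_perm_filter_card_le_le {m : ℕ} {a b : Fin m → α} (hab : (Sum.elim a b).Injective)
    {A B : Finset α} (hAB : Disjoint A B) (hA : Fintype.card α + 16 * m ≤ 8 * #A)
    (hB : Fintype.card α + 16 * m ≤ 8 * #B) (j : ℕ) :
    (#{σ : Equiv.Perm α | #{i | σ (a i) ∈ A ∧ σ (b i) ∈ B} ≤ j} : ℝ) ≤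
      2 ^ j * (127 / 128) ^ m * (Fintype.card α).factorial := by
  have hm : 2 * m ≤ Fintype.card α := by have := card_le_univ A; omega
  have hdensity : ∀ V : Finset α, #V + 2 ≤ 2 * m →
      ∑ z ∈ Vᶜ.offDiag, halfOn (A ×ˢ B) z ≤ 127 / 128 * #Vᶜ.offDiag := by
    intro V hV
    refine sum_halfOn_offDiag_le A B V hAB ?_ ?_ <;> rw [card_compl]
    · have := le_card_sdiff V A; omega
    · have := le_card_sdiff V B; omega
  have hseq := PairSeq.sum_fresh_prod_le _ (halfOn_nonneg _) (by norm_num) hdensity m ∅ (by simp)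
  calc (#{σ : Equiv.Perm α | #{i | σ (a i) ∈ A ∧ σ (b i) ∈ B} ≤ j} : ℝ)
      ≤ 2 ^ j * ∑ σ : Equiv.Perm α, ∏ i, halfOn (A ×ˢ B) (σ (a i), σ (b i)) := by
        simp only [prod_halfOn_eq]
        exact card_filter_le_le_two_pow_mul_sum _ _ _
    _ ≤ 2 ^ j * ((Fintype.card α - 2 * m).factorial *
          ((127 / 128) ^ m * (Fintype.card α).descFactorial (2 * m))) := by
        gcongr
        refine (sum_perm_prod_le _ (halfOn_nonneg _) hab).trans ?_
        gcongr
        simpa using hseq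
    _ = 2 ^ j * (127 / 128) ^ m * (Fintype.card α).factorial := by
        rw [← Nat.factorial_mul_descFactorial hm, Nat.cast_mul]
        ring

end Perm

def finIco (N lo hi : ℕ) : Finset (Fin N) := {v | lo ≤ v.val ∧ v.val < hi}

theorem card_finIco {N lo hi : ℕ} (h : hi ≤ N) : #(finIco N lo hi) = hi - lo := by
  have hmap : (finIco N lo hi).map Fin.valEmbedding = Ico lo hi := by
    ext x
    simp only [finIco, mem_map, mem_filter, mem_univ, true_and, Fin.valEmbedding_apply, mem_Ico]
    exact ⟨by rintro ⟨v, hv, rfl⟩; exact hv, fun hx => ⟨⟨x, by omega⟩, hx, rfl⟩⟩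
  rw [← card_map Fin.valEmbedding, hmap, Nat.card_Ico]

theorem disjoint_finIco {N lo hi lo' hi' : ℕ} (h : hi ≤ lo') :
    Disjoint (finIco N lo hi) (finIco N lo' hi') := by
  rw [disjoint_left]
  intro v hv hv'
  simp only [finIco, mem_filter, mem_univ, true_and] at hv hv'
  omega

def offsetIdx {k N : ℕ} (o : ℕ) (h : o + k ≤ N) (i : Fin k) : Fin N := ⟨o + i, by omega⟩

theorem injective_sum_elim_offsetIdx {k N o o' : ℕ} (h : o + k ≤ N) (h' : o' + k ≤ N)
    (hoo' : o + k ≤ o') : (Sum.elim (offsetIdx o h) (offsetIdx o' h')).Injective := by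
  rintro (i | i) (i' | i') hii' <;> simp [offsetIdx, Fin.ext_iff] at hii' ⊢ <;> omega

theorem card_perm_lt_div_le_exp {d : ℕ} (hd : 8 ∣ d) {a b : Fin (d / 8) → Fin (2 * d)}
    (hab : (Sum.elim a b).Injective) {A B : Finset (Fin (2 * d))} (hAB : Disjoint A B)
    (hA : d / 2 ≤ #A) (hB : d / 2 ≤ #B) :
    (#{σ : Equiv.Perm (Fin (2 * d)) | (#{i | σ (a i) ∈ A ∧ σ (b i) ∈ B} : ℝ) < d / 1024} : ℝ)
      / (2 * d).factorial ≤ Real.exp (-(1 / 4096 * d)) := by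
  have hcount := card_perm_filter_card_le_le hab hAB (j := d / 1024)
    (by rw [Fintype.card_fin]; omega) (by rw [Fintype.card_fin]; omega)
  have hexp := two_pow_mul_pow_le_exp (j := d / 1024) (m := d / 8) (by omega)
  have hm : ((d / 8 : ℕ) : ℝ) = (d : ℝ) / 8 := by rw [Nat.cast_div hd (by norm_num)]; norm_num
  rw [Fintype.card_fin] at hcount
  rw [hm] at hexp
  rw [div_le_iff₀ (by positivity)]
  calc (#{σ : Equiv.Perm (Fin (2 * d)) | (#{i | σ (a i) ∈ A ∧ σ (b i) ∈ B} : ℝ) < d / 1024} : ℝ)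
      ≤ #{σ : Equiv.Perm (Fin (2 * d)) | #{i | σ (a i) ∈ A ∧ σ (b i) ∈ B} ≤ d / 1024} := by
        refine Nat.cast_le.2 (card_le_card fun σ => ?_)
        simp only [mem_filter, mem_univ, true_and]
        intro h
        rw [Nat.le_div_iff_mul_le (by norm_num)]
        exact_mod_cast (by linarith : (#{i | σ (a i) ∈ A ∧ σ (b i) ∈ B} : ℝ) * 1024 ≤ d)
    _ ≤ _ := hcount
    _ ≤ Real.exp (-(1 / 4096 * d)) * (2 * d).factorial := by
        gcongr
        rwa [show -(1 / 4096 * (d : ℝ)) = -((d : ℝ) / 8 / 512) by ring]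

theorem goodPairsF_eq (d : ℕ) (σ : Equiv.Perm (Fin (2 * d))) :
    goodPairsF d σ = #{i : Fin (d / 8) | σ (offsetIdx 0 (by omega) i) ∈ finIco (2 * d) 0 (d / 2) ∧
      σ (offsetIdx d (by omega) i) ∈ finIco (2 * d) d (d + d / 2)} := by
  simp [goodPairsF, finIco, offsetIdx]

theorem goodPairsF'_eq (d : ℕ) (σ : Equiv.Perm (Fin (2 * d))) :
    goodPairsF' d σ = #{i : Fin (d / 8) |
      σ (offsetIdx (d / 2) (by omega) i) ∈ finIco (2 * d) (d / 2) d ∧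
      σ (offsetIdx (d + d / 2) (by omega) i) ∈ finIco (2 * d) (d + d / 2) (2 * d)} := by
  simp [goodPairsF', finIco, offsetIdx, and_assoc]

theorem one_sub_le_card_filter_and_div {ι : Type*} [Fintype ι] [Nonempty ι] (p q : ι → Prop)
    [DecidablePred p] [DecidablePred q] :
    1 - #{x | ¬p x} / Fintype.card ι - #{x | ¬q x} / Fintype.card ι ≤
      (#{x | p x ∧ q x} : ℝ) / Fintype.card ι := by
  have hcompl : #{x | p x ∧ q x} + #{x | ¬(p x ∧ q x)} = Fintype.card ι :=
    card_filter_add_card_filter_not _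
  have hunion : #{x | ¬(p x ∧ q x)} ≤ #{x | ¬p x} + #{x | ¬q x} := by
    classical
    refine (card_le_card fun x => ?_).trans (card_union_le _ _)
    simp only [mem_filter, mem_univ, true_and, mem_union]
    tauto
  have hN : (0 : ℝ) < Fintype.card ι := by exact_mod_cast Fintype.card_pos
  rw [le_div_iff₀ hN, sub_mul, sub_mul, div_mul_cancel₀ _ hN.ne', div_mul_cancel₀ _ hN.ne', one_mul]
  have : (#{x | p x ∧ q x} : ℝ) + #{x | ¬(p x ∧ q x)} = Fintype.card ι := by exact_mod_cast hcompl
  have : (#{x | ¬(p x ∧ q x)} : ℝ) ≤ #{x | ¬p x} + #{x | ¬q x} := by exact_mod_cast hunion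
  linarith

/-- Concentration: there is a constant `α > 0`, independent of `d`, such that for every
positive multiple `d` of `8`, under the uniform distribution on permutations of
`Fin (2d)`, `Prob[f < d/1024] ≤ exp(−αd)`, `Prob[f' < d/1024] ≤ exp(−αd)`, and
consequently `Prob[f ≥ d/1024 and f' ≥ d/1024] ≥ 1 − 2 exp(−αd)`. -/
theorem concentration_goodPairs :
    ∃ α : ℝ, 0 < α ∧ ∀ d : ℕ, 0 < d → 8 ∣ d →
      (((Finset.univ.filter (fun σ : Equiv.Perm (Fin (2 * d)) =>
            (goodPairsF d σ : ℝ) < (d : ℝ) / 1024)).card : ℝ)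
          / (Nat.factorial (2 * d) : ℝ) ≤ Real.exp (-(α * d))) ∧
      (((Finset.univ.filter (fun σ : Equiv.Perm (Fin (2 * d)) =>
            (goodPairsF' d σ : ℝ) < (d : ℝ) / 1024)).card : ℝ)
          / (Nat.factorial (2 * d) : ℝ) ≤ Real.exp (-(α * d))) ∧
      (1 - 2 * Real.exp (-(α * d)) ≤
        ((Finset.univ.filter (fun σ : Equiv.Perm (Fin (2 * d)) =>
            (d : ℝ) / 1024 ≤ (goodPairsF d σ : ℝ) ∧
            (d : ℝ) / 1024 ≤ (goodPairsF' d σ : ℝ))).card : ℝ)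
          / (Nat.factorial (2 * d) : ℝ)) := by
  refine ⟨1 / 4096, by norm_num, fun d _ hd => ?_⟩
  have hF : (#{σ : Equiv.Perm (Fin (2 * d)) | (goodPairsF d σ : ℝ) < d / 1024} : ℝ)
      / (2 * d).factorial ≤ Real.exp (-(1 / 4096 * d)) := by
    simp only [goodPairsF_eq]
    exact card_perm_lt_div_le_exp hd (injective_sum_elim_offsetIdx _ _ (by omega))
      (disjoint_finIco (by omega)) (by rw [card_finIco (by omega)]; omega)
      (by rw [card_finIco (by omega)]; omega)
  have hF' : (#{σ : Equiv.Perm (Fin (2 * d)) | (goodPairsF' d σ : ℝ) < d / 1024} : ℝ)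
      / (2 * d).factorial ≤ Real.exp (-(1 / 4096 * d)) := by
    simp only [goodPairsF'_eq]
    exact card_perm_lt_div_le_exp hd (injective_sum_elim_offsetIdx _ _ (by omega))
      (disjoint_finIco (by omega)) (by rw [card_finIco (by omega)]; omega)
      (by rw [card_finIco le_rfl]; omega)
  have hunion := one_sub_le_card_filter_and_div
    (fun σ : Equiv.Perm (Fin (2 * d)) => (d : ℝ) / 1024 ≤ goodPairsF d σ)
    (fun σ => (d : ℝ) / 1024 ≤ goodPairsF' d σ)
  simp only [not_le, Fintype.card_perm, Fintype.card_fin] at hunion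
  exact ⟨hF, hF', by linarith⟩
end

section
/- With f, g, u_c, and φ_c as in the context, for every c ∈ Fin D it holds that φ_c(f) = g(c). [This is the interpolation step in the proof of Theorem 4.8: for each 0–1 assignment to the selector variables encoding c, the polynomial f = Σ_c u_c·σ_c(P) specializes to σ_c(P).] -/
open MvPolynomial

/-- Interpolation: with selector monomials `u_c = ∏_j X(inr(enc c j, j))` and
`f = Σ_c u_c · rename inl (g c)`, the evaluation `φ_c` sending `X(inl v) ↦ X v` and
`X(inr(b,j)) ↦ 1` if `b = enc c j` and `0` otherwise, satisfies `φ_c(f) = g c`. -/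
theorem interpolation_selector (R : Type*) [CommRing R] (V : Type*) (k D : ℕ)
    (enc : Fin D → Fin k → Fin 2) (henc : Function.Injective enc)
    (g : Fin D → MvPolynomial V R) (c : Fin D) :
    MvPolynomial.aeval
        (Sum.elim (fun v : V => (X v : MvPolynomial V R))
          (fun p : Fin 2 × Fin k => if p.1 = enc c p.2 then 1 else 0))
        (∑ c' : Fin D,
          (∏ j : Fin k, (X (Sum.inr (enc c' j, j)) :
              MvPolynomial (V ⊕ (Fin 2 × Fin k)) R)) *
            MvPolynomial.rename Sum.inl (g c'))
      = g c := by
  rw [map_sum]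
  have key : ∀ c' : Fin D,
      MvPolynomial.aeval
        (Sum.elim (fun v : V => (X v : MvPolynomial V R))
          (fun p : Fin 2 × Fin k => if p.1 = enc c p.2 then 1 else 0))
        ((∏ j : Fin k, (X (Sum.inr (enc c' j, j)) :
              MvPolynomial (V ⊕ (Fin 2 × Fin k)) R)) *
            MvPolynomial.rename Sum.inl (g c'))
      = (if c' = c then 1 else 0) * g c' := by
    intro c'
    rw [map_mul, map_prod]
    have h2 : (MvPolynomial.aeval
        (Sum.elim (fun v : V => (X v : MvPolynomial V R))
          (fun p : Fin 2 × Fin k => if p.1 = enc c p.2 then 1 else 0)))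
        (MvPolynomial.rename Sum.inl (g c')) = g c' := by
      rw [aeval_rename]
      simp [Function.comp]
    rw [h2]
    congr 1
    by_cases h : c' = c
    · subst h; simp
    · simp only [aeval_X, Sum.elim_inr]
      have : ∃ j : Fin k, enc c' j ≠ enc c j := by
        by_contra hall
        push_neg at hall
        exact h (henc (funext hall))
      obtain ⟨j, hj⟩ := this
      rw [if_neg h]
      apply Finset.prod_eq_zero (Finset.mem_univ j)
      simp [hj]
  simp only [key]
  rw [Finset.sum_eq_single c] <;> simp_all
end
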